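/- arXiv:2404.17951 — 7 statements merged into one kernel-verified Lean document; each statement's English description precedes it below -/
import Mathlib

section
/- Let d ≥ 1, let μ₁, μ₂ ∈ ℝ^d, and let Σ₁, Σ₂ be symmetric positive definite real d×d matrices. Define D_CS = (1/2)·(μ₂−μ₁)ᵀ(Σ₁+Σ₂)⁻¹(μ₂−μ₁) + (1/2)·ln( det(Σ₁+Σ₂) / (2^d · √(det Σ₁ · det Σ₂)) ), D_KL(1‖2) = (1/2)·( tr(Σ₂⁻¹Σ₁) − d + (μ₂−μ₁)ᵀΣ₂⁻¹(μ₂−μ₁) + ln(det Σ₂ / det Σ₁) ), and D_KL(2‖1) = (1/2)·( tr(Σ₁⁻¹Σ₂) − d + (μ₁−μ₂)ᵀΣ₁⁻¹(μ₁−μ₂) + ln(det Σ₁ / det Σ₂) ). Then D_CS ≤ min(D_KL(1‖2), D_KL(2‖1)). -/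
/-!
The mean-free part of the Gaussian KL divergence is nonnegative:
`log det Q - log det P ≤ tr (P⁻¹ Q) - d`, which via `A = P^{-1/2} Q P^{-1/2}` is `log λ ≤ λ - 1`
summed over the eigenvalues of `A`. Its instance `(P, Q) = (Σ₂, (Σ₁ + Σ₂) / 2)` plus half its
instance `(P, Q) = (Σ₂, Σ₁)` is the log-determinant part of `D_CS ≤ D_KL(p‖q)`; the mean part is
`(Σ₁ + Σ₂)⁻¹ ≤ Σ₂⁻¹` in the Loewner order. As `D_CS` is symmetric, swapping `p` and `q` gives
the bound by `D_KL(q‖p)`.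
-/

open Matrix Real

namespace Matrix

variable {n : Type*} [Fintype n] [DecidableEq n]

theorem PosDef.log_det_le_trace_sub_card {A : Matrix n n ℝ} (hA : A.PosDef) :
    log A.det ≤ A.trace - Fintype.card n := by
  have hpos := hA.eigenvalues_pos
  rw [hA.isHermitian.det_eq_prod_eigenvalues, hA.isHermitian.trace_eq_sum_eigenvalues]
  simp only [RCLike.ofReal_real_eq_id, id]
  rw [log_prod fun i _ => (hpos i).ne']
  calc ∑ i, log (hA.isHermitian.eigenvalues i)
      ≤ ∑ i, (hA.isHermitian.eigenvalues i - 1) :=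
        Finset.sum_le_sum fun i _ => log_le_sub_one_of_pos (hpos i)
    _ = _ := by simp [Finset.sum_sub_distrib]

open scoped MatrixOrder in
theorem PosDef.log_det_sub_log_det_le {P Q : Matrix n n ℝ} (hP : P.PosDef) (hQ : Q.PosDef) :
    log Q.det - log P.det ≤ (P⁻¹ * Q).trace - Fintype.card n := by
  set R := CFC.sqrt P⁻¹
  have hRR : R * R = P⁻¹ := CFC.sqrt_mul_sqrt_self _ hP.inv.posSemidef.nonneg
  have hRh : Rᴴ = R := (CFC.sqrt_nonneg P⁻¹).posSemidef.isHermitian.eq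
  have hR : IsUnit R := isUnit_of_mul_isUnit_left (hRR ▸ hP.inv.isUnit)
  have hA : (R * Q * R).PosDef := by
    have := hQ.conjTranspose_mul_mul_same (mulVec_injective_iff_isUnit.mpr hR)
    rwa [hRh] at this
  have hdet : (R * Q * R).det = P.det⁻¹ * Q.det := by
    rw [det_mul, det_mul, mul_right_comm, ← det_mul, hRR, det_nonsing_inv, Ring.inverse_eq_inv']
  have htrace : (R * Q * R).trace = (P⁻¹ * Q).trace := by
    rw [trace_mul_cycle, hRR]
  have := hA.log_det_le_trace_sub_card
  rwa [hdet, htrace, log_mul (inv_ne_zero hP.det_pos.ne') hQ.det_pos.ne', log_inv,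
    neg_add_eq_sub] at this

theorem PosDef.dotProduct_inv_add_mulVec_le {A B : Matrix n n ℝ} (hA : A.PosSemidef)
    (hB : B.PosDef) (v : n → ℝ) :
    v ⬝ᵥ ((A + B)⁻¹ *ᵥ v) ≤ v ⬝ᵥ (B⁻¹ *ᵥ v) := by
  have hAB : IsUnit (A + B).det :=
    (isUnit_iff_isUnit_det _).mp (add_comm A B ▸ hB.add_posSemidef hA).isUnit
  have hB' : IsUnit B.det := (isUnit_iff_isUnit_det _).mp hB.isUnit
  set y := (A + B)⁻¹ *ᵥ v
  set z := B⁻¹ *ᵥ v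
  have hy : (A + B) *ᵥ y = v := by simp only [y, mulVec_mulVec, mul_nonsing_inv _ hAB, one_mulVec]
  have hz : B *ᵥ z = v := by simp only [z, mulVec_mulVec, mul_nonsing_inv _ hB', one_mulVec]
  have hBsymm : ∀ x w, x ⬝ᵥ (B *ᵥ w) = w ⬝ᵥ (B *ᵥ x) := fun x w => by
    rw [dotProduct_mulVec, ← mulVec_transpose, dotProduct_comm,
      ← conjTranspose_eq_transpose_of_trivial, hB.isHermitian.eq]
  have hexpand : (z - y) ⬝ᵥ (B *ᵥ (z - y)) = v ⬝ᵥ z - 2 * (v ⬝ᵥ y) + y ⬝ᵥ (B *ᵥ y) := by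
    rw [mulVec_sub, dotProduct_sub, sub_dotProduct, sub_dotProduct, hBsymm z y, hz,
      dotProduct_comm z v, dotProduct_comm y v]
    ring
  have hAy : y ⬝ᵥ (A *ᵥ y) + y ⬝ᵥ (B *ᵥ y) = v ⬝ᵥ y := by
    rw [← dotProduct_add, ← add_mulVec, hy, dotProduct_comm]
  have h₁ := hB.posSemidef.dotProduct_mulVec_nonneg (z - y)
  have h₂ := hA.dotProduct_mulVec_nonneg y
  simp only [star_trivial] at h₁ h₂
  linarith

theorem PosDef.log_det_add_div_le {S₁ S₂ : Matrix n n ℝ} (h₁ : S₁.PosDef) (h₂ : S₂.PosDef) :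
    log ((S₁ + S₂).det / (2 ^ Fintype.card n * √(S₁.det * S₂.det)))
      ≤ (S₂⁻¹ * S₁).trace - Fintype.card n + log (S₂.det / S₁.det) := by
  have hd₁ := h₁.det_pos
  have hd₂ := h₂.det_pos
  have hd₁₂ := (h₁.add h₂).det_pos
  have hmid := h₂.log_det_sub_log_det_le ((h₁.add h₂).smul (a := (2⁻¹ : ℝ)) (by norm_num))
  have hS₁ := h₂.log_det_sub_log_det_le h₁
  rw [det_smul, log_mul (by positivity) hd₁₂.ne', log_pow, log_inv, Matrix.mul_smul, trace_smul,
    mul_add, trace_add, nonsing_inv_mul _ ((isUnit_iff_isUnit_det _).mp h₂.isUnit), trace_one,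
    smul_eq_mul] at hmid
  rw [log_div hd₁₂.ne' (by positivity), log_mul (by positivity) (by positivity), log_pow,
    log_sqrt (by positivity), log_mul hd₁.ne' hd₂.ne', log_div hd₂.ne' hd₁.ne']
  linarith

end Matrix

section GaussianDivergence

variable {n : Type*} [Fintype n] [DecidableEq n]

noncomputable def gaussianCSDiv (μ₁ μ₂ : n → ℝ) (S₁ S₂ : Matrix n n ℝ) : ℝ :=
  (1/2) * ((μ₂ - μ₁) ⬝ᵥ ((S₁ + S₂)⁻¹ *ᵥ (μ₂ - μ₁)))
    + (1/2) * log ((S₁ + S₂).det / (2 ^ Fintype.card n * √(S₁.det * S₂.det)))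

-- `D_KL(N(μ₁, S₁) ‖ N(μ₂, S₂))`
noncomputable def gaussianKLDiv (μ₁ μ₂ : n → ℝ) (S₁ S₂ : Matrix n n ℝ) : ℝ :=
  (1/2) * ((S₂⁻¹ * S₁).trace - Fintype.card n + (μ₂ - μ₁) ⬝ᵥ (S₂⁻¹ *ᵥ (μ₂ - μ₁))
    + log (S₂.det / S₁.det))

theorem gaussianCSDiv_comm (μ₁ μ₂ : n → ℝ) (S₁ S₂ : Matrix n n ℝ) :
    gaussianCSDiv μ₂ μ₁ S₂ S₁ = gaussianCSDiv μ₁ μ₂ S₁ S₂ := by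
  rw [gaussianCSDiv, gaussianCSDiv, add_comm S₂, mul_comm S₂.det, ← neg_sub μ₂, mulVec_neg,
    dotProduct_neg, neg_dotProduct, neg_neg]

theorem gaussianCSDiv_le_gaussianKLDiv (μ₁ μ₂ : n → ℝ) {S₁ S₂ : Matrix n n ℝ}
    (h₁ : S₁.PosDef) (h₂ : S₂.PosDef) :
    gaussianCSDiv μ₁ μ₂ S₁ S₂ ≤ gaussianKLDiv μ₁ μ₂ S₁ S₂ := by
  have hquad := h₂.dotProduct_inv_add_mulVec_le h₁.posSemidef (μ₂ - μ₁)
  have hlogdet := h₁.log_det_add_div_le h₂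
  rw [gaussianCSDiv, gaussianKLDiv]
  linarith

end GaussianDivergence

theorem cs_divergence_le_min_kl_general (d : ℕ) (μ₁ μ₂ : Fin d → ℝ)
    (S₁ S₂ : Matrix (Fin d) (Fin d) ℝ) (h₁ : S₁.PosDef) (h₂ : S₂.PosDef) :
    (1/2) * ((μ₂ - μ₁) ⬝ᵥ ((S₁ + S₂)⁻¹ *ᵥ (μ₂ - μ₁)))
      + (1/2) * Real.log ((S₁ + S₂).det / (2 ^ d * Real.sqrt (S₁.det * S₂.det)))
    ≤ min
      ((1/2) * ((S₂⁻¹ * S₁).trace - (d : ℝ) + (μ₂ - μ₁) ⬝ᵥ (S₂⁻¹ *ᵥ (μ₂ - μ₁))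
        + Real.log (S₂.det / S₁.det)))
      ((1/2) * ((S₁⁻¹ * S₂).trace - (d : ℝ) + (μ₁ - μ₂) ⬝ᵥ (S₁⁻¹ *ᵥ (μ₁ - μ₂))
        + Real.log (S₁.det / S₂.det))) := by
  have hforward := gaussianCSDiv_le_gaussianKLDiv μ₁ μ₂ h₁ h₂
  have hreverse := gaussianCSDiv_le_gaussianKLDiv μ₂ μ₁ h₂ h₁
  rw [gaussianCSDiv_comm] at hreverse
  simp only [gaussianCSDiv, gaussianKLDiv, Fintype.card_fin] at hforward hreverse
  exact le_min hforward hreverse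

/-- Theorem 1: the Cauchy-Schwarz divergence between two multivariate Gaussians
(in closed form) is bounded by the minimum of the forward and reverse KL divergences. -/
theorem cs_divergence_le_min_kl (d : ℕ) (hd : 1 ≤ d) (μ₁ μ₂ : Fin d → ℝ)
    (S₁ S₂ : Matrix (Fin d) (Fin d) ℝ) (h₁ : S₁.PosDef) (h₂ : S₂.PosDef) :
    (1/2) * ((μ₂ - μ₁) ⬝ᵥ ((S₁ + S₂)⁻¹ *ᵥ (μ₂ - μ₁)))
      + (1/2) * Real.log ((S₁ + S₂).det / (2 ^ d * Real.sqrt (S₁.det * S₂.det)))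
    ≤ min
      ((1/2) * ((S₂⁻¹ * S₁).trace - (d : ℝ) + (μ₂ - μ₁) ⬝ᵥ (S₂⁻¹ *ᵥ (μ₂ - μ₁))
        + Real.log (S₂.det / S₁.det)))
      ((1/2) * ((S₁⁻¹ * S₂).trace - (d : ℝ) + (μ₁ - μ₂) ⬝ᵥ (S₁⁻¹ *ᵥ (μ₁ - μ₂))
        + Real.log (S₁.det / S₂.det))) :=
  cs_divergence_le_min_kl_general d μ₁ μ₂ S₁ S₂ h₁ h₂
end

section
/- Let dₓ, d_t ≥ 1 and let Σ be a symmetric positive definite real (dₓ+d_t)×(dₓ+d_t) matrix written in block form Σ = [[Σₓ, Σₓₜ],[Σₓₜᵀ, Σₜ]] with Σₓ of size dₓ×dₓ and Σₜ of size d_t×d_t. Let D = [[Σₓ, 0],[0, Σₜ]] be the corresponding block-diagonal matrix and d = dₓ + d_t. Then (1/2)·ln( det(Σ + D) / (2^d · √(det Σ · det D)) ) ≤ (1/2)·ln( det D / det Σ ), where det D = det Σₓ · det Σₜ. (The left side is the Cauchy-Schwarz divergence between N(μ,Σ) and N(μ,D), i.e., the CS quadratic mutual information of jointly Gaussian (x,t);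 the right side is their Shannon mutual information.) -/
/-!
Fischer's inequality `det [[A, B], [Bᴴ, C]] ≤ det A * det C` for positive definite block matrices
follows from the Schur complement formula and the monotonicity of `det` on the positive semidefinite
cone. Applied to `Σ` it gives `det Σ ≤ det D`; applied to `Σ + D = [[2Σₓ, Σₓₜ], [Σₓₜᵀ, 2Σₜ]]` it
gives `det (Σ + D) ≤ 2^d det D`. Hence the CS ratio is at most `√(det D / det Σ)`, which is at most
`det D / det Σ` because that quotient is at least `1`.
-/

open Matrix Real

namespace Matrix

variable {m n : Type*} [Fintype m] [Fintype n] [DecidableEq m] [DecidableEq n]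

theorem PosSemidef.one_le_det_one_add {M : Matrix n n ℝ} (hM : M.PosSemidef) :
    1 ≤ (1 + M).det := by
  have ha : IsSelfAdjoint M := hM.1
  have hcfc : 1 + M = cfc (fun x : ℝ => 1 + x) M := by
    rw [cfc_const_add (1 : ℝ) (fun x => x) M, cfc_id' ℝ M, map_one]
  rw [hcfc, hM.1.cfc_eq]
  simp only [IsHermitian.cfc, RCLike.ofReal_real_eq_id, CompTriple.comp_eq, det_map, det_diagonal,
    Function.comp_apply]
  exact Finset.one_le_prod fun i _ => le_add_of_nonneg_right (hM.eigenvalues_nonneg i)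

open scoped MatrixOrder in
theorem PosDef.det_le_det_add {A B : Matrix n n ℝ} (hA : A.PosDef) (hB : B.PosSemidef) :
    A.det ≤ (A + B).det := by
  set R := CFC.sqrt A⁻¹
  have hR : Rᴴ = R := (CFC.sqrt_nonneg A⁻¹).posSemidef.1
  have hRR : R * R = A⁻¹ := CFC.sqrt_mul_sqrt_self _ hA.inv.posSemidef.nonneg
  have hRBR : (R * B * R).PosSemidef := by
    simpa only [hR] using hB.conjTranspose_mul_mul_same R
  -- `A + B = A * (1 + A⁻¹ * B)`, and Sylvester's identity symmetrises `A⁻¹ * B = R * (R * B)`.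
  have hfactor : (A + B).det = A.det * (1 + R * B * R).det := by
    rw [← det_one_add_mul_comm, ← mul_assoc, hRR, ← det_mul, mul_add, mul_one, ← mul_assoc,
      mul_nonsing_inv A hA.det_pos.ne'.isUnit, one_mul]
  rw [hfactor]
  exact le_mul_of_one_le_right hA.det_pos.le hRBR.one_le_det_one_add

theorem PosSemidef.det_le_det_add {A B : Matrix n n ℝ} (hA : A.PosSemidef) (hB : B.PosSemidef) :
    A.det ≤ (A + B).det := by
  by_cases h : A.det = 0
  · rw [h]
    exact (hA.add hB).det_nonneg
  · exact (hA.posDef_iff_det_ne_zero.mpr h).det_le_det_add hB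

theorem det_fromBlocks_le_det_mul_det {A : Matrix m m ℝ} {B : Matrix m n ℝ} {C : Matrix n m ℝ}
    {D : Matrix n n ℝ} (hA : A.PosDef) (h : (fromBlocks A B C D).PosSemidef) :
    (fromBlocks A B C D).det ≤ A.det * D.det := by
  obtain rfl : Bᴴ = C := (isHermitian_fromBlocks_iff.mp h.1).2.1
  have := hA.isUnit.invertible
  have hSchur : (D - Bᴴ * A⁻¹ * B).PosSemidef := (hA.fromBlocks₁₁ B D).mp h
  have hK : (Bᴴ * A⁻¹ * B).PosSemidef := hA.inv.posSemidef.conjTranspose_mul_mul_same B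
  rw [det_fromBlocks₁₁, invOf_eq_nonsing_inv]
  gcongr
  · exact hA.det_pos.le
  · simpa using hSchur.det_le_det_add hK

end Matrix

theorem Real.log_div_mul_sqrt_le_log_div {s t u c : ℝ} (hu : 0 < u) (hs : 0 < s) (hst : s ≤ t)
    (hc : 0 < c) (huc : u ≤ c * t) : log (u / (c * √(s * t))) ≤ log (t / s) := by
  have ht : 0 < t := hs.trans_le hst
  have hs_le : s ≤ √(s * t) := le_sqrt_of_sq_le (by nlinarith)
  have hsqrt : 0 < √(s * t) := hs.trans_le hs_le
  refine log_le_log (div_pos hu (mul_pos hc hsqrt)) ?_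
  rw [div_le_div_iff₀ (mul_pos hc hsqrt) hs]
  nlinarith [mul_le_mul_of_nonneg_right huc hs.le,
    mul_le_mul_of_nonneg_left hs_le (by positivity : 0 ≤ c * t)]

theorem cs_qmi_le_shannon_mi_general (dx dt : ℕ)
    (Sx : Matrix (Fin dx) (Fin dx) ℝ) (St : Matrix (Fin dt) (Fin dt) ℝ)
    (Sxt : Matrix (Fin dx) (Fin dt) ℝ)
    (S : Matrix (Fin dx ⊕ Fin dt) (Fin dx ⊕ Fin dt) ℝ)
    (hS : S = Matrix.fromBlocks Sx Sxt Sxtᵀ St)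
    (D : Matrix (Fin dx ⊕ Fin dt) (Fin dx ⊕ Fin dt) ℝ)
    (hD : D = Matrix.fromBlocks Sx 0 0 St)
    (hSpd : S.PosDef) :
    (1/2) * Real.log ((S + D).det / (2 ^ (dx + dt) * Real.sqrt (S.det * D.det)))
      ≤ (1/2) * Real.log (D.det / S.det) ∧ D.det = Sx.det * St.det := by
  have hblocks : (fromBlocks Sx Sxt Sxtᵀ St).PosDef := hS ▸ hSpd
  have hSx : Sx.PosDef := hblocks.submatrix Sum.inl_injective
  have hSt : St.PosDef := hblocks.submatrix Sum.inr_injective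
  have := hSx.isUnit.invertible
  have hDpsd : D.PosSemidef := by
    simpa [hD] using (hSx.fromBlocks₁₁ 0 St).mpr (by simpa using hSt.posSemidef)
  have hdetD : D.det = Sx.det * St.det := hD ▸ det_fromBlocks_zero₂₁ Sx 0 St
  have hS_le : S.det ≤ D.det := by
    rw [hS, hdetD]
    exact det_fromBlocks_le_det_mul_det hSx hblocks.posSemidef
  have hSD_le : (S + D).det ≤ 2 ^ (dx + dt) * D.det := by
    have hSD : S + D = fromBlocks ((2 : ℝ) • Sx) Sxt Sxtᵀ ((2 : ℝ) • St) := by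
      rw [hS, hD, fromBlocks_add, add_zero, add_zero, two_smul, two_smul]
    calc (S + D).det ≤ ((2 : ℝ) • Sx).det * ((2 : ℝ) • St).det :=
          hSD ▸ det_fromBlocks_le_det_mul_det (hSx.smul two_pos) (hSD ▸ hSpd.posSemidef.add hDpsd)
      _ = 2 ^ (dx + dt) * D.det := by
          rw [hdetD, det_smul, det_smul, Fintype.card_fin, Fintype.card_fin]
          ring
  refine ⟨?_, hdetD⟩
  gcongr (1/2) * ?_
  exact log_div_mul_sqrt_le_log_div (hSpd.add_posSemidef hDpsd).det_pos hSpd.det_pos hS_le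
    (by positivity) hSD_le

/-- Corollary 1: for jointly Gaussian (x, t), the Cauchy-Schwarz quadratic mutual
information (the CS divergence between the joint Gaussian N(μ,Σ) and the product of
marginals N(μ, diag(Σₓ,Σₜ)), in closed form) is no greater than the Shannon mutual
information (1/2)·ln(det Σₓ · det Σₜ / det Σ), where det D = det Σₓ · det Σₜ. -/
theorem cs_qmi_le_shannon_mi (dx dt : ℕ) (hdx : 1 ≤ dx) (hdt : 1 ≤ dt)
    (Sx : Matrix (Fin dx) (Fin dx) ℝ) (St : Matrix (Fin dt) (Fin dt) ℝ)
    (Sxt : Matrix (Fin dx) (Fin dt) ℝ)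
    (S : Matrix (Fin dx ⊕ Fin dt) (Fin dx ⊕ Fin dt) ℝ)
    (hS : S = Matrix.fromBlocks Sx Sxt Sxtᵀ St)
    (D : Matrix (Fin dx ⊕ Fin dt) (Fin dx ⊕ Fin dt) ℝ)
    (hD : D = Matrix.fromBlocks Sx 0 0 St)
    (hSpd : S.PosDef) :
    (1/2) * Real.log ((S + D).det / (2 ^ (dx + dt) * Real.sqrt (S.det * D.det)))
      ≤ (1/2) * Real.log (D.det / S.det) ∧ D.det = Sx.det * St.det :=
  cs_qmi_le_shannon_mi_general dx dt Sx St Sxt S hS D hD hSpd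
end

section
/- Let d ≥ 1 be a real number and x > 0 a real number. Then d·ln(1 + x/d) + (d/2)·ln(x/d) − x + d ≤ d·ln 2, with equality if and only if x = d. -/
open Real

lemma log_one_add_div_two_add_log_div_two_le {t : ℝ} (ht : 0 < t) :
    log ((1 + t) / 2) + log t / 2 ≤ t - 1 := by
  linarith [log_le_sub_one_of_pos (by linarith : 0 < (1 + t) / 2), log_le_sub_one_of_pos ht]

lemma log_one_add_div_two_add_log_div_two_lt {t : ℝ} (ht : 0 < t) (h1 : t ≠ 1) :
    log ((1 + t) / 2) + log t / 2 < t - 1 := by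
  linarith [log_le_sub_one_of_pos (by linarith : 0 < (1 + t) / 2), log_lt_sub_one_of_pos ht h1]

/-- The scalar inequality used in the proof of Theorem 1:
for real d ≥ 1 and x > 0, d·ln(1+x/d) + (d/2)·ln(x/d) − x + d ≤ d·ln 2,
with equality iff x = d. -/
theorem scalar_log_ineq (d : ℝ) (hd : 1 ≤ d) (x : ℝ) (hx : 0 < x) :
    d * Real.log (1 + x / d) + (d / 2) * Real.log (x / d) - x + d ≤ d * Real.log 2 ∧
    (d * Real.log (1 + x / d) + (d / 2) * Real.log (x / d) - x + d = d * Real.log 2 ↔ x = d) := by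
  have hd0 : 0 < d := by linarith
  have ht : 0 < x / d := div_pos hx hd0
  -- in the variable `t = x / d` the inequality becomes `d` times the scale-free one above
  have hdefect : d * log (1 + x / d) + (d / 2) * log (x / d) - x + d - d * log 2 =
      d * (log ((1 + x / d) / 2) + log (x / d) / 2 - (x / d - 1)) := by
    rw [log_div (by linarith) two_ne_zero]
    field_simp
    ring
  refine ⟨?_, ⟨fun heq => ?_, fun hxd => ?_⟩⟩
  · nlinarith [log_one_add_div_two_add_log_div_two_le ht]
  · by_contra hne
    have h1 : x / d ≠ 1 := by rwa [ne_eq, div_eq_one_iff_eq hd0.ne']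
    nlinarith [log_one_add_div_two_add_log_div_two_lt ht h1]
  · rw [hxd, div_self hd0.ne', log_one]
    norm_num
end

section
/- Let d ≥ 1 and let Σ₁, Σ₂ be symmetric positive definite real d×d matrices. Then ln( det(Σ₁+Σ₂) / (2^d · √(det Σ₁ · det Σ₂)) ) ≤ tr(Σ₂⁻¹Σ₁) − d + ln( det Σ₂ / det Σ₁ ). -/
open Matrix Real
open scoped MatrixOrder

/-!
The key fact is nonnegativity of the KL divergence between centred Gaussians,
`log (det A / det B) ≤ tr (B⁻¹ A) - n` for positive definite `A`, `B`: conjugating by `B^{-1/2}`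
reduces it to `log λ ≤ λ - 1` on the eigenvalues of `B^{-1/2} A B^{-1/2}`. Applying it to
`(Σ₁, Σ₂)` and to the midpoint `((Σ₁ + Σ₂) / 2, Σ₂)` and averaging the two bounds gives the theorem.
-/

namespace Matrix.PosDef

variable {n : Type*} [Fintype n] [DecidableEq n] {A B : Matrix n n ℝ}

theorem log_det_le_trace_sub_card_s6 (hA : A.PosDef) : log A.det ≤ A.trace - Fintype.card n := by
  have hH := hA.isHermitian
  simp only [hH.det_eq_prod_eigenvalues, hH.trace_eq_sum_eigenvalues, RCLike.ofReal_real_eq_id,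
    id_eq]
  rw [log_prod fun i _ => (hA.eigenvalues_pos i).ne', ← Finset.card_univ, ← nsmul_one,
    ← Finset.sum_const, ← Finset.sum_sub_distrib]
  exact Finset.sum_le_sum fun i _ => log_le_sub_one_of_pos (hA.eigenvalues_pos i)

theorem log_det_div_det_le_trace_inv_mul_sub_card (hA : A.PosDef) (hB : B.PosDef) :
    log (A.det / B.det) ≤ (B⁻¹ * A).trace - Fintype.card n := by
  set R := CFC.sqrt B⁻¹
  have hR : R.PosDef := (IsStrictlyPositive.sqrt B⁻¹ hB.inv.isStrictlyPositive).posDef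
  have hRR : R * R = B⁻¹ := CFC.sqrt_mul_sqrt_self B⁻¹ hB.inv.posSemidef.nonneg
  have hM : (R * A * R).PosDef := by
    simpa only [hR.isHermitian.eq] using
      hA.conjTranspose_mul_mul_same (mulVec_injective_iff_isUnit.mpr hR.isUnit)
  calc log (A.det / B.det) = log (R * A * R).det := by
        rw [det_mul, det_mul, mul_right_comm, ← det_mul, hRR, det_nonsing_inv,
          Ring.inverse_eq_inv', div_eq_inv_mul]
    _ ≤ (R * A * R).trace - Fintype.card n := hM.log_det_le_trace_sub_card_s6
    _ = (B⁻¹ * A).trace - Fintype.card n := by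
        rw [trace_mul_cycle, hRR]

end Matrix.PosDef

theorem cov_cs_le_kl_general (d : ℕ)
    (S₁ S₂ : Matrix (Fin d) (Fin d) ℝ) (h₁ : S₁.PosDef) (h₂ : S₂.PosDef) :
    Real.log ((S₁ + S₂).det / (2 ^ d * Real.sqrt (S₁.det * S₂.det)))
      ≤ (S₂⁻¹ * S₁).trace - (d : ℝ) + Real.log (S₂.det / S₁.det) := by
  have kl := h₁.log_det_div_det_le_trace_inv_mul_sub_card h₂
  have hmid : ((2 : ℝ)⁻¹ • (S₁ + S₂)).PosDef := (h₁.add h₂).smul (by norm_num)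
  have kl_mid := hmid.log_det_div_det_le_trace_inv_mul_sub_card h₂
  have hS₂ : S₂⁻¹ * S₂ = 1 := nonsing_inv_mul S₂ h₂.det_pos.ne'.isUnit
  rw [det_smul, mul_smul_comm, trace_smul, mul_add, hS₂, trace_add, trace_one] at kl_mid
  have hd₁ := h₁.det_pos
  have hd₂ := h₂.det_pos
  have hsum := (h₁.add h₂).det_pos
  simp only [Fintype.card_fin, smul_eq_mul] at kl kl_mid
  rw [log_div (by positivity) hd₂.ne', log_mul (by positivity) hsum.ne', log_pow, log_inv] at kl_mid
  rw [log_div hd₁.ne' hd₂.ne'] at kl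
  rw [log_div hsum.ne' (by positivity), log_mul (by positivity) (by positivity), log_pow,
    log_sqrt (by positivity), log_mul hd₁.ne' hd₂.ne', log_div hd₂.ne' hd₁.ne']
  linarith

/-- The covariance-part inequality (Eqs. (67)–(74)) in the proof of Theorem 1:
twice the Cauchy-Schwarz divergence between equal-mean Gaussians is at most
twice their KL divergence. -/
theorem cov_cs_le_kl (d : ℕ) (hd : 1 ≤ d)
    (S₁ S₂ : Matrix (Fin d) (Fin d) ℝ) (h₁ : S₁.PosDef) (h₂ : S₂.PosDef) :
    Real.log ((S₁ + S₂).det / (2 ^ d * Real.sqrt (S₁.det * S₂.det)))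
      ≤ (S₂⁻¹ * S₁).trace - (d : ℝ) + Real.log (S₂.det / S₁.det) :=
  cov_cs_le_kl_general d S₁ S₂ h₁ h₂
end

section
/- Let (Ω, 𝒜, μ) be a measure space and let a, b : Ω → [0,∞) be measurable functions with 0 < ∫ a dμ < ∞ and 0 < ∫ b dμ < ∞, such that a vanishes μ-a.e. on the set where b vanishes, and such that the integral ∫ a·log(a/b) dμ exists in (−∞, +∞]. Then ( ∫ a dμ )·log( (∫ a dμ)/(∫ b dμ) ) ≤ ∫ a·log(a/b) dμ. -/
open MeasureTheory

/-! The tangent-line bound `x - y ≤ x log (x / y)` (i.e. `log t ≥ 1 - 1/t`) applied to `a` and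
`c b`, integrated, gives `∫ a - c ∫ b ≤ ∫ a log (a / b) - (∫ a) log c` for every `c > 0`;
the choice `c = ∫ a / ∫ b` kills the left-hand side. -/

namespace Real

lemma sub_le_mul_log_div {x y : ℝ} (hx : 0 ≤ x) (hy : 0 ≤ y) (hxy : y = 0 → x = 0) :
    x - y ≤ x * log (x / y) := by
  rcases hx.eq_or_lt with rfl | hx
  · simpa using hy
  have hy : 0 < y := hy.lt_of_ne' fun h => hx.ne' (hxy h)
  calc x - y = x * (1 - (x / y)⁻¹) := by field_simp
    _ ≤ x * log (x / y) := by gcongr; exact one_sub_inv_le_log_of_pos (by positivity)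

lemma sub_mul_le_mul_log_div_sub {x y c : ℝ} (hx : 0 ≤ x) (hy : 0 ≤ y) (hc : 0 < c)
    (hxy : y = 0 → x = 0) :
    x - c * y ≤ x * log (x / y) - x * log c := by
  rcases hx.eq_or_lt with rfl | hx
  · simpa using mul_nonneg hc.le hy
  have hy : 0 < y := hy.lt_of_ne' fun h => hx.ne' (hxy h)
  have hlog : log (x / (c * y)) = log (x / y) - log c := by
    rw [mul_comm, ← div_div, log_div (by positivity) hc.ne']
  calc x - c * y ≤ x * log (x / (c * y)) :=
        sub_le_mul_log_div hx.le (by positivity) fun h => absurd h (by positivity)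
    _ = x * log (x / y) - x * log c := by rw [hlog, mul_sub]

end Real

lemma integral_sub_mul_le_integral_mul_log_div_sub {Ω : Type*} [MeasurableSpace Ω]
    {μ : Measure Ω} {a b : Ω → ℝ} {c : ℝ} (ha0 : ∀ ω, 0 ≤ a ω) (hb0 : ∀ ω, 0 ≤ b ω)
    (hc : 0 < c) (hai : Integrable a μ) (hbi : Integrable b μ)
    (hvan : ∀ᵐ ω ∂μ, b ω = 0 → a ω = 0)
    (hint : Integrable (fun ω => a ω * Real.log (a ω / b ω)) μ) :
    (∫ ω, a ω ∂μ) - c * ∫ ω, b ω ∂μ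
      ≤ (∫ ω, a ω * Real.log (a ω / b ω) ∂μ) - (∫ ω, a ω ∂μ) * Real.log c := by
  have hpointwise := hvan.mono fun ω h => Real.sub_mul_le_mul_log_div_sub (ha0 ω) (hb0 ω) hc h
  rw [← integral_const_mul, ← integral_mul_const, ← integral_sub hai (hbi.const_mul c),
    ← integral_sub hint (hai.mul_const _)]
  exact integral_mono_ae (hai.sub (hbi.const_mul c)) (hint.sub (hai.mul_const _)) hpointwise

theorem log_sum_inequality_integral_general {Ω : Type*} [MeasurableSpace Ω] (μ : Measure Ω)
    (a b : Ω → ℝ)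
    (ha0 : ∀ ω, 0 ≤ a ω) (hb0 : ∀ ω, 0 ≤ b ω)
    (hai : Integrable a μ) (hbi : Integrable b μ)
    (hapos : 0 < ∫ ω, a ω ∂μ) (hbpos : 0 < ∫ ω, b ω ∂μ)
    (hvan : ∀ᵐ ω ∂μ, b ω = 0 → a ω = 0)
    (hint : Integrable (fun ω => a ω * Real.log (a ω / b ω)) μ) :
    (∫ ω, a ω ∂μ) * Real.log ((∫ ω, a ω ∂μ) / (∫ ω, b ω ∂μ))
      ≤ ∫ ω, a ω * Real.log (a ω / b ω) ∂μ := by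
  have h := integral_sub_mul_le_integral_mul_log_div_sub ha0 hb0 (div_pos hapos hbpos)
    hai hbi hvan hint
  rw [div_mul_cancel₀ _ hbpos.ne', sub_self] at h
  linarith

/-- Continuous log-sum inequality (Eq. (85)): for nonnegative integrable a, b with
positive integrals, with a vanishing a.e. where b vanishes, and with the integral
∫ a·log(a/b) existing in (−∞, +∞] (its negative part is integrable; when the integral
is +∞ the claim is trivial, so it is stated for the integrable case),
(∫ a)·log((∫ a)/(∫ b)) ≤ ∫ a·log(a/b). -/
theorem log_sum_inequality_integral {Ω : Type*} [MeasurableSpace Ω] (μ : Measure Ω)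
    (a b : Ω → ℝ) (ham : Measurable a) (hbm : Measurable b)
    (ha0 : ∀ ω, 0 ≤ a ω) (hb0 : ∀ ω, 0 ≤ b ω)
    (hai : Integrable a μ) (hbi : Integrable b μ)
    (hapos : 0 < ∫ ω, a ω ∂μ) (hbpos : 0 < ∫ ω, b ω ∂μ)
    (hvan : ∀ᵐ ω ∂μ, b ω = 0 → a ω = 0)
    (hneg : Integrable (fun ω => min (a ω * Real.log (a ω / b ω)) 0) μ)
    (hint : Integrable (fun ω => a ω * Real.log (a ω / b ω)) μ) :
    (∫ ω, a ω ∂μ) * Real.log ((∫ ω, a ω ∂μ) / (∫ ω, b ω ∂μ))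
      ≤ ∫ ω, a ω * Real.log (a ω / b ω) ∂μ :=
  log_sum_inequality_integral_general μ a b ha0 hb0 hai hbi hapos hbpos hvan hint
end

section
/- Let d ≥ 1, let K ⊆ ℝ^d be a Lebesgue-measurable set with Lebesgue measure |K| satisfying 0 < |K| < ∞, and let p, q : ℝ^d → [0,∞) be measurable functions that are square-integrable over K with ∫_K p > 0, ∫_K q > 0, ∫_K p² > 0, ∫_K q² > 0 and ∫_K p·q > 0, such that p vanishes a.e. on the subset of K where q vanishes and ∫_K p·log(p/q) exists in (−∞, +∞]. Set C₁ = ∫_K p and C₂ = (∫_K p) / ( ∫_K p² · ∫_K q² )^{1/4}. Then C₁ · [ log( (∫_K p² · ∫_K q²)^{1/2} / ∫_K p·q ) − log |K| + 2·log C₂ ] ≤ ∫_K p·log(p/q). -/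
/-!
Write `P = ∫_K p`, `S = ∫_K p q` and `V = |K|`. The constant `C₂` cancels `∫_K p²` and `∫_K q²`
from `D_CS`, so the left-hand side is `P log (P² / (V S))`. Pointwise,
`log (p / q) = log (p V / P) - log (q P / S) + log (P² / (V S))`, and the elementary bounds
`a log (a / s) ≥ a - s` and `a log (b / t) ≤ a b / t - a` replace the first two terms by
`p - P / V` and `p q P / S - p`, whose integrals over `K` vanish.
-/

open MeasureTheory Real Set

namespace Real

lemma sub_le_mul_log_div_s13 {a s : ℝ} (ha : 0 ≤ a) (hs : 0 < s) : a - s ≤ a * log (a / s) := by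
  rcases ha.eq_or_lt with rfl | ha
  · simpa using hs.le
  calc a - s = a * (1 - (a / s)⁻¹) := by field_simp
    _ ≤ a * log (a / s) := by gcongr; exact one_sub_inv_le_log_of_pos (by positivity)

lemma mul_log_div_le_mul_div_sub {a b t : ℝ} (ha : 0 ≤ a) (hb : 0 < b) (ht : 0 < t) :
    a * log (b / t) ≤ a * b / t - a :=
  calc a * log (b / t) ≤ a * (b / t - 1) := by gcongr; exact log_le_sub_one_of_pos (by positivity)
    _ = a * b / t - a := by ring

lemma sub_sub_add_mul_log_le_mul_log_div {a b s t : ℝ} (ha : 0 ≤ a) (hb : 0 ≤ b)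
    (hab : b = 0 → a = 0) (hs : 0 < s) (ht : 0 < t) :
    (a - s) - (a * b / t - a) + a * log (s / t) ≤ a * log (a / b) := by
  rcases ha.eq_or_lt with rfl | ha
  · simpa using hs.le
  have hb : 0 < b := hb.lt_of_ne fun h ↦ ha.ne' (hab h.symm)
  have hsplit : log (a / b) = log (a / s) - log (b / t) + log (s / t) := by
    rw [log_div ha.ne' hb.ne', log_div ha.ne' hs.ne', log_div hb.ne' ht.ne',
      log_div hs.ne' ht.ne']
    ring
  rw [hsplit, mul_add, mul_sub]
  linarith [sub_le_mul_log_div_s13 ha.le hs, mul_log_div_le_mul_div_sub ha.le hb ht]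

lemma log_sqrt_div_add_two_mul_log_div_rpow {x P S : ℝ} (hx : 0 < x) (hP : P ≠ 0) (hS : S ≠ 0) :
    log (√x / S) + 2 * log (P / x ^ ((1 : ℝ) / 4)) = 2 * log P - log S := by
  rw [log_div (sqrt_ne_zero'.2 hx) hS, log_sqrt hx.le, log_div hP (rpow_pos_of_pos hx _).ne',
    log_rpow hx]
  ring

end Real

section

variable {α : Type*} [MeasurableSpace α] {μ : Measure α} [IsFiniteMeasure μ] {p q : α → ℝ}

theorem integral_sub_sub_add_mul_log_le_integral_mul_log_div (hp0 : 0 ≤ᵐ[μ] p)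
    (hq0 : 0 ≤ᵐ[μ] q) (hvan : ∀ᵐ x ∂μ, q x = 0 → p x = 0) (hp : Integrable p μ)
    (hpq : Integrable (fun x ↦ p x * q x) μ) (hlog : Integrable (fun x ↦ p x * log (p x / q x)) μ)
    {s t : ℝ} (hs : 0 < s) (ht : 0 < t) :
    ((∫ x, p x ∂μ) - s * μ.real univ) - ((∫ x, p x * q x ∂μ) / t - ∫ x, p x ∂μ)
        + (∫ x, p x ∂μ) * log (s / t) ≤ ∫ x, p x * log (p x / q x) ∂μ := by
  have hle : ∀ᵐ x ∂μ, (p x - s) - (p x * q x / t - p x) + p x * log (s / t)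
      ≤ p x * log (p x / q x) := by
    filter_upwards [hp0, hq0, hvan] with x hpx hqx hx
    exact sub_sub_add_mul_log_le_mul_log_div hpx hqx hx hs ht
  refine le_of_eq_of_le ?_ (integral_mono_ae (by fun_prop) hlog hle)
  rw [integral_add (by fun_prop) (by fun_prop), integral_sub (by fun_prop) (by fun_prop),
    integral_sub (by fun_prop) (by fun_prop), integral_sub (by fun_prop) (by fun_prop),
    integral_const, integral_div, integral_mul_const, smul_eq_mul, mul_comm s]

theorem mul_two_mul_log_sub_le_integral_mul_log_div (hp0 : 0 ≤ᵐ[μ] p) (hq0 : 0 ≤ᵐ[μ] q)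
    (hvan : ∀ᵐ x ∂μ, q x = 0 → p x = 0) (hp : Integrable p μ)
    (hpq : Integrable (fun x ↦ p x * q x) μ) (hlog : Integrable (fun x ↦ p x * log (p x / q x)) μ)
    (hP : 0 < ∫ x, p x ∂μ) (hS : 0 < ∫ x, p x * q x ∂μ) :
    (∫ x, p x ∂μ) * (2 * log (∫ x, p x ∂μ) - log (μ.real univ) - log (∫ x, p x * q x ∂μ))
      ≤ ∫ x, p x * log (p x / q x) ∂μ := by
  set P := ∫ x, p x ∂μ
  set S := ∫ x, p x * q x ∂μ
  have : NeZero μ := ⟨by rintro rfl; simp [P] at hP⟩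
  have hV := measureReal_univ_pos (μ := μ)
  -- `s = P / V` and `t = S / P` make the two correction terms vanish.
  refine le_of_eq_of_le ?_ (integral_sub_sub_add_mul_log_le_integral_mul_log_div hp0 hq0 hvan hp
    hpq hlog (div_pos hP hV) (div_pos hS hP))
  rw [div_div_div_eq, log_div (by positivity) (by positivity), log_mul hP.ne' hP.ne',
    log_mul hV.ne' hS.ne']
  field_simp
  ring

end

theorem cs_kl_general_densities_general (d : ℕ) (K : Set (Fin d → ℝ)) (hKfin : volume K < ⊤)
    (p q : (Fin d → ℝ) → ℝ) (hp0 : ∀ x, 0 ≤ p x) (hq0 : ∀ x, 0 ≤ q x)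
    (hp2 : MemLp p 2 (volume.restrict K)) (hq2 : MemLp q 2 (volume.restrict K))
    (hppos : 0 < ∫ x in K, p x) (hp2pos : 0 < ∫ x in K, p x ^ 2) (hq2pos : 0 < ∫ x in K, q x ^ 2)
    (hpqpos : 0 < ∫ x in K, p x * q x)
    (hvan : ∀ᵐ x ∂(volume.restrict K), q x = 0 → p x = 0)
    (hint : Integrable (fun x => p x * Real.log (p x / q x)) (volume.restrict K)) :
    (∫ x in K, p x) *
      (Real.log (Real.sqrt ((∫ x in K, p x ^ 2) * (∫ x in K, q x ^ 2)) / ∫ x in K, p x * q x)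
        - Real.log ((volume K).toReal)
        + 2 * Real.log ((∫ x in K, p x) / ((∫ x in K, p x ^ 2) * (∫ x in K, q x ^ 2)) ^ ((1 : ℝ) / 4)))
      ≤ ∫ x in K, p x * Real.log (p x / q x) := by
  have : IsFiniteMeasure (volume.restrict K) := isFiniteMeasure_restrict.2 hKfin.ne
  have key := mul_two_mul_log_sub_le_integral_mul_log_div (ae_of_all _ hp0) (ae_of_all _ hq0) hvan
    (hp2.integrable one_le_two) (hp2.integrable_mul hq2) hint hppos hpqpos
  rw [measureReal_restrict_apply_univ, measureReal_def] at key
  refine le_of_eq_of_le ?_ key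
  linear_combination (∫ x in K, p x) *
    log_sqrt_div_add_two_mul_log_div_rpow (mul_pos hp2pos hq2pos) hppos.ne' hpqpos.ne'

/-- Proposition 5: for square-integrable densities p, q on a bounded-measure set
K ⊆ ℝ^d, with C₁ = ∫_K p and C₂ = ∫_K p / (∫_K p² · ∫_K q²)^{1/4},
C₁·[D_CS − log|K| + 2·log C₂] ≤ D_KL, where
D_CS = log((∫_K p² · ∫_K q²)^{1/2} / ∫_K p·q) and D_KL = ∫_K p·log(p/q)
(assumed to exist in (−∞, +∞]: its negative part is integrable; the inequality is
stated in the nontrivial case where the integral is finite). -/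
theorem cs_kl_general_densities (d : ℕ) (hd : 1 ≤ d)
    (K : Set (Fin d → ℝ)) (hKm : MeasurableSet K)
    (hKpos : 0 < volume K) (hKfin : volume K < ⊤)
    (p q : (Fin d → ℝ) → ℝ) (hpm : Measurable p) (hqm : Measurable q)
    (hp0 : ∀ x, 0 ≤ p x) (hq0 : ∀ x, 0 ≤ q x)
    (hp2 : MemLp p 2 (volume.restrict K)) (hq2 : MemLp q 2 (volume.restrict K))
    (hppos : 0 < ∫ x in K, p x) (hqpos : 0 < ∫ x in K, q x)
    (hp2pos : 0 < ∫ x in K, p x ^ 2) (hq2pos : 0 < ∫ x in K, q x ^ 2)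
    (hpqpos : 0 < ∫ x in K, p x * q x)
    (hvan : ∀ᵐ x ∂(volume.restrict K), q x = 0 → p x = 0)
    (hneg : Integrable (fun x => min (p x * Real.log (p x / q x)) 0) (volume.restrict K))
    (hint : Integrable (fun x => p x * Real.log (p x / q x)) (volume.restrict K)) :
    (∫ x in K, p x) *
      (Real.log (Real.sqrt ((∫ x in K, p x ^ 2) * (∫ x in K, q x ^ 2)) / ∫ x in K, p x * q x)
        - Real.log ((volume K).toReal)
        + 2 * Real.log ((∫ x in K, p x) / ((∫ x in K, p x ^ 2) * (∫ x in K, q x ^ 2)) ^ ((1 : ℝ) / 4)))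
      ≤ ∫ x in K, p x * Real.log (p x / q x) :=
  cs_kl_general_densities_general d K hKfin p q hp0 hq0 hp2 hq2 hppos hp2pos hq2pos hpqpos hvan hint
end

section
/- Let d ≥ 1, let μ₁, μ₂ ∈ ℝ^d, and let Σ₁, Σ₂ be symmetric positive definite real d×d matrices. Define the Gaussian densities p(x) = ((2π)^d · det Σ₁)^{-1/2} · exp( −(1/2)·(x−μ₁)ᵀΣ₁⁻¹(x−μ₁) ) and q(x) = ((2π)^d · det Σ₂)^{-1/2} · exp( −(1/2)·(x−μ₂)ᵀΣ₂⁻¹(x−μ₂) ). Then −log( ( ∫_{ℝ^d} p·q dx )² / ( ∫_{ℝ^d} p² dx · ∫_{ℝ^d} q² dx ) ) = (μ₂−μ₁)ᵀ(Σ₁+Σ₂)⁻¹(μ₂−μ₁) + log( det(Σ₁+Σ₂) / (2^d · √(det Σ₁ · det Σ₂)) ). -/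
/-!
Completing the square, the product of the densities of `N(μ₁, S₁)` and `N(μ₂, S₂)` is an
unnormalised Gaussian in `x`, with precision `S₁⁻¹ + S₂⁻¹`, times
`exp (-½ (μ₂ - μ₁)ᵀ (S₁ + S₂)⁻¹ (μ₂ - μ₁))`. Integrating it out with
`∫ exp (-½ xᵀ M x) = √((2π)ᵈ / det M)` and `det (S₁⁻¹ + S₂⁻¹) = det (S₁ + S₂) / (det S₁ det S₂)`
gives `∫ p q = N(μ₂; μ₁, S₁ + S₂)`, and `∫ p² = N(μ₁; μ₁, 2 S₁)`. The Gaussian integral itself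
reduces to the standard one by writing `M = Bᵀ B` and substituting `y = B x`.
-/

open Matrix Real MeasureTheory

noncomputable def cauchySchwarzDivergence {α : Type*} [MeasurableSpace α] (μ : Measure α)
    (p q : α → ℝ) : ℝ :=
  -log ((∫ x, p x * q x ∂μ) ^ 2 / ((∫ x, p x ^ 2 ∂μ) * ∫ x, q x ^ 2 ∂μ))

variable {ι : Type*} [Fintype ι]

theorem integral_exp_neg_mul_sum_sq (b : ℝ) :
    ∫ x : ι → ℝ, exp (-b * ∑ i, x i ^ 2) = √(π / b) ^ Fintype.card ι := by
  simp_rw [Finset.mul_sum, exp_sum]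
  rw [integral_fintype_prod_volume_eq_pow (fun t : ℝ => exp (-b * t ^ 2)), integral_gaussian]

variable [DecidableEq ι]

theorem integral_comp_mulVec {E : Type*} [NormedAddCommGroup E] [NormedSpace ℝ E]
    {B : Matrix ι ι ℝ} (hB : B.det ≠ 0) (f : (ι → ℝ) → E) :
    ∫ x, f (B *ᵥ x) = |B.det|⁻¹ • ∫ x, f x := by
  have hemb : MeasurableEmbedding (toLin' B) :=
    (LinearMap.equivOfDetNeZero (toLin' B) (by rwa [LinearMap.det_toLin'])
      ).toContinuousLinearEquiv.toHomeomorph.measurableEmbedding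
  have hmap := hemb.integral_map (μ := volume) f
  rw [map_matrix_volume_pi_eq_smul_volume_pi hB, integral_smul_measure,
    ENNReal.toReal_ofReal (abs_nonneg _), abs_inv] at hmap
  simpa [toLin'_apply] using hmap.symm

open scoped MatrixOrder in
theorem integral_exp_neg_half_dotProduct_mulVec {M : Matrix ι ι ℝ} (hM : M.PosDef) :
    ∫ x, exp (-(1 / 2) * (x ⬝ᵥ M *ᵥ x)) = √((2 * π) ^ Fintype.card ι / M.det) := by
  obtain ⟨B, rfl⟩ := CStarAlgebra.nonneg_iff_eq_star_mul_self.mp hM.posSemidef.nonneg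
  have hdet : (star B * B).det = B.det ^ 2 := by
    rw [det_mul, star_eq_conjTranspose, det_conjTranspose, star_trivial, sq]
  have hB : B.det ≠ 0 := fun h => hM.det_pos.ne' (by rw [hdet, h]; ring)
  have hquad (x : ι → ℝ) : x ⬝ᵥ (star B * B) *ᵥ x = ∑ i, (B *ᵥ x) i ^ 2 := by
    rw [← mulVec_mulVec, star_eq_conjTranspose, conjTranspose_eq_transpose_of_trivial,
      dotProduct_mulVec, vecMul_transpose]
    simp only [dotProduct, sq]
  simp_rw [hquad]
  rw [integral_comp_mulVec hB (fun y => exp (-(1 / 2) * ∑ i, y i ^ 2)),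
    integral_exp_neg_mul_sum_sq, hdet, smul_eq_mul, sqrt_div' _ (sq_nonneg _),
    sqrt_sq_eq_abs, div_div_eq_mul_div, div_one, mul_comm π 2, inv_mul_eq_div]
  congr 1
  rw [← sqrt_sq (by positivity : 0 ≤ √(2 * π) ^ Fintype.card ι), pow_right_comm,
    sq_sqrt (by positivity)]

theorem inv_quadForm_add_inv_quadForm_eq {R : Type*} [CommRing R] {S₁ S₂ : Matrix ι ι R}
    (hS₁ : S₁.IsSymm) (hS₂ : S₂.IsSymm) (h₁ : IsUnit S₁.det) (h₂ : IsUnit S₂.det)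
    (y u : ι → R) :
    (y + S₁ *ᵥ u) ⬝ᵥ S₁⁻¹ *ᵥ (y + S₁ *ᵥ u) + (y - S₂ *ᵥ u) ⬝ᵥ S₂⁻¹ *ᵥ (y - S₂ *ᵥ u)
      = y ⬝ᵥ (S₁⁻¹ + S₂⁻¹) *ᵥ y + u ⬝ᵥ (S₁ + S₂) *ᵥ u := by
  have hinv (S : Matrix ι ι R) (hS : S.IsSymm) (h : IsUnit S.det) :
      S⁻¹ *ᵥ (S *ᵥ u) = u ∧ (S *ᵥ u) ⬝ᵥ S⁻¹ *ᵥ y = u ⬝ᵥ y := by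
    refine ⟨by rw [mulVec_mulVec, nonsing_inv_mul _ h, one_mulVec], ?_⟩
    rw [dotProduct_comm, dotProduct_mulVec, ← mulVec_transpose, hS.eq, mulVec_mulVec,
      mul_nonsing_inv _ h, one_mulVec, dotProduct_comm]
  obtain ⟨hu₁, hy₁⟩ := hinv S₁ hS₁ h₁
  obtain ⟨hu₂, hy₂⟩ := hinv S₂ hS₂ h₂
  simp only [mulVec_add, mulVec_sub, add_mulVec, add_dotProduct, sub_dotProduct, dotProduct_add,
    dotProduct_sub, hu₁, hu₂, hy₁, hy₂, dotProduct_comm y u, dotProduct_comm (S₁ *ᵥ u) u,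
    dotProduct_comm (S₂ *ᵥ u) u]
  ring

theorem det_inv_add_inv {K : Type*} [Field K] {S₁ S₂ : Matrix ι ι K} (h₁ : S₁.det ≠ 0)
    (h₂ : S₂.det ≠ 0) : (S₁⁻¹ + S₂⁻¹).det = (S₁ + S₂).det / (S₁.det * S₂.det) := by
  have hfactor : S₁⁻¹ + S₂⁻¹ = S₁⁻¹ * (S₁ + S₂) * S₂⁻¹ := by
    rw [mul_add, add_mul, nonsing_inv_mul _ h₁.isUnit, one_mul, mul_assoc,
      mul_nonsing_inv _ h₂.isUnit, mul_one, add_comm]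
  rw [hfactor, det_mul, det_mul, det_nonsing_inv, det_nonsing_inv, Ring.inverse_eq_inv']
  field_simp

noncomputable def gaussianDensity (μ : ι → ℝ) (S : Matrix ι ι ℝ) (x : ι → ℝ) : ℝ :=
  (√((2 * π) ^ Fintype.card ι * S.det))⁻¹ * exp (-(1 / 2) * ((x - μ) ⬝ᵥ S⁻¹ *ᵥ (x - μ)))

theorem gaussianDensity_self (μ : ι → ℝ) (S : Matrix ι ι ℝ) :
    gaussianDensity μ S μ = (√((2 * π) ^ Fintype.card ι * S.det))⁻¹ := by
  simp [gaussianDensity]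

theorem integral_gaussianDensity_mul_gaussianDensity {S₁ S₂ : Matrix ι ι ℝ} (h₁ : S₁.PosDef)
    (h₂ : S₂.PosDef) (μ₁ μ₂ : ι → ℝ) :
    ∫ x, gaussianDensity μ₁ S₁ x * gaussianDensity μ₂ S₂ x = gaussianDensity μ₁ (S₁ + S₂) μ₂ := by
  set δ := μ₂ - μ₁
  set T := (S₁ + S₂)⁻¹
  set u := T *ᵥ δ
  have hu : (S₁ + S₂) *ᵥ u = δ := by
    rw [mulVec_mulVec, mul_nonsing_inv _ (h₁.add h₂).det_pos.ne'.isUnit, one_mulVec]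
  have hcentered (y : ι → ℝ) :
      gaussianDensity μ₁ S₁ (y + (μ₁ + S₁ *ᵥ u)) * gaussianDensity μ₂ S₂ (y + (μ₁ + S₁ *ᵥ u))
        = ((√((2 * π) ^ Fintype.card ι * S₁.det))⁻¹ * (√((2 * π) ^ Fintype.card ι * S₂.det))⁻¹
            * exp (-(1 / 2) * (δ ⬝ᵥ T *ᵥ δ)))
          * exp (-(1 / 2) * (y ⬝ᵥ (S₁⁻¹ + S₂⁻¹) *ᵥ y)) := by
    have e₁ : y + (μ₁ + S₁ *ᵥ u) - μ₁ = y + S₁ *ᵥ u := by abel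
    have e₂ : y + (μ₁ + S₁ *ᵥ u) - μ₂ = y - S₂ *ᵥ u := by
      rw [add_mulVec] at hu
      linear_combination (norm := module) hu
    have hsquare := inv_quadForm_add_inv_quadForm_eq (isHermitian_iff_isSymm.mp h₁.isHermitian)
      (isHermitian_iff_isSymm.mp h₂.isHermitian) h₁.det_pos.ne'.isUnit h₂.det_pos.ne'.isUnit y u
    rw [hu, dotProduct_comm u] at hsquare
    simp only [gaussianDensity, e₁, e₂]
    rw [mul_mul_mul_comm, ← exp_add, ← mul_add, hsquare, mul_add, exp_add]
    ring
  have hconst : (√((2 * π) ^ Fintype.card ι * S₁.det))⁻¹ * (√((2 * π) ^ Fintype.card ι * S₂.det))⁻¹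
      * √((2 * π) ^ Fintype.card ι / ((S₁ + S₂).det / (S₁.det * S₂.det)))
      = (√((2 * π) ^ Fintype.card ι * (S₁ + S₂).det))⁻¹ := by
    have := h₁.det_pos; have := h₂.det_pos; have := (h₁.add h₂).det_pos
    rw [← sqrt_inv, ← sqrt_inv, ← sqrt_inv, ← sqrt_mul (by positivity),
      ← sqrt_mul (by positivity)]
    congr 1
    field_simp
  rw [← integral_add_right_eq_self _ (μ₁ + S₁ *ᵥ u)]
  simp_rw [hcentered]
  rw [integral_const_mul, integral_exp_neg_half_dotProduct_mulVec (h₁.inv.add h₂.inv),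
    det_inv_add_inv h₁.det_pos.ne' h₂.det_pos.ne', gaussianDensity, ← hconst]
  ring

theorem integral_gaussianDensity_sq {S : Matrix ι ι ℝ} (h : S.PosDef) (μ : ι → ℝ) :
    ∫ x, gaussianDensity μ S x ^ 2
      = (√((2 * π) ^ Fintype.card ι * (2 ^ Fintype.card ι * S.det)))⁻¹ := by
  simp_rw [sq]
  rw [integral_gaussianDensity_mul_gaussianDensity h h, gaussianDensity_self, ← two_smul ℝ S,
    det_smul]

theorem gaussianDensity_cauchySchwarz_ratio {S₁ S₂ : Matrix ι ι ℝ} (h₁ : S₁.PosDef)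
    (h₂ : S₂.PosDef) (μ₁ μ₂ : ι → ℝ) :
    (∫ x, gaussianDensity μ₁ S₁ x * gaussianDensity μ₂ S₂ x) ^ 2
        / ((∫ x, gaussianDensity μ₁ S₁ x ^ 2) * (∫ x, gaussianDensity μ₂ S₂ x ^ 2))
      = exp (-((μ₂ - μ₁) ⬝ᵥ (S₁ + S₂)⁻¹ *ᵥ (μ₂ - μ₁)))
        * (2 ^ Fintype.card ι * √(S₁.det * S₂.det) / (S₁ + S₂).det) := by
  rw [integral_gaussianDensity_mul_gaussianDensity h₁ h₂, integral_gaussianDensity_sq h₁,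
    integral_gaussianDensity_sq h₂, gaussianDensity]
  have := h₁.det_pos; have := h₂.det_pos; have := (h₁.add h₂).det_pos
  have hden : (√((2 * π) ^ Fintype.card ι * (2 ^ Fintype.card ι * S₁.det)))⁻¹
      * (√((2 * π) ^ Fintype.card ι * (2 ^ Fintype.card ι * S₂.det)))⁻¹
      = ((2 * π) ^ Fintype.card ι * 2 ^ Fintype.card ι * √(S₁.det * S₂.det))⁻¹ := by
    rw [← mul_inv, ← sqrt_mul (by positivity),
      ← sqrt_sq (by positivity : (0 : ℝ) ≤ (2 * π) ^ Fintype.card ι * 2 ^ Fintype.card ι),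
      ← sqrt_mul (by positivity)]
    congr 2
    ring
  rw [hden, mul_pow, inv_pow, sq_sqrt (by positivity), ← exp_nat_mul]
  field_simp
  ring_nf

theorem cauchySchwarzDivergence_gaussianDensity {S₁ S₂ : Matrix ι ι ℝ} (h₁ : S₁.PosDef)
    (h₂ : S₂.PosDef) (μ₁ μ₂ : ι → ℝ) :
    cauchySchwarzDivergence volume (gaussianDensity μ₁ S₁) (gaussianDensity μ₂ S₂)
      = (μ₂ - μ₁) ⬝ᵥ (S₁ + S₂)⁻¹ *ᵥ (μ₂ - μ₁)
        + log ((S₁ + S₂).det / (2 ^ Fintype.card ι * √(S₁.det * S₂.det))) := by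
  have := h₁.det_pos; have := h₂.det_pos; have := (h₁.add h₂).det_pos
  rw [cauchySchwarzDivergence, gaussianDensity_cauchySchwarz_ratio h₁ h₂,
    log_mul (exp_ne_zero _) (by positivity), log_exp, ← inv_div, log_inv]
  ring

theorem cs_divergence_gaussians_closed_form_general (d : ℕ) (μ₁ μ₂ : Fin d → ℝ)
    (S₁ S₂ : Matrix (Fin d) (Fin d) ℝ) (h₁ : S₁.PosDef) (h₂ : S₂.PosDef)
    (p q : (Fin d → ℝ) → ℝ)
    (hp : p = fun x => (Real.sqrt ((2 * Real.pi) ^ d * S₁.det))⁻¹ *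
      Real.exp (-(1 / 2) * ((x - μ₁) ⬝ᵥ (S₁⁻¹ *ᵥ (x - μ₁)))))
    (hq : q = fun x => (Real.sqrt ((2 * Real.pi) ^ d * S₂.det))⁻¹ *
      Real.exp (-(1 / 2) * ((x - μ₂) ⬝ᵥ (S₂⁻¹ *ᵥ (x - μ₂))))) :
    -Real.log ((∫ x, p x * q x ∂volume) ^ 2 /
        ((∫ x, p x ^ 2 ∂volume) * (∫ x, q x ^ 2 ∂volume)))
      = (μ₂ - μ₁) ⬝ᵥ ((S₁ + S₂)⁻¹ *ᵥ (μ₂ - μ₁))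
        + Real.log ((S₁ + S₂).det / (2 ^ d * Real.sqrt (S₁.det * S₂.det))) := by
  subst hp hq
  simpa only [cauchySchwarzDivergence, gaussianDensity, Fintype.card_fin] using
    cauchySchwarzDivergence_gaussianDensity h₁ h₂ μ₁ μ₂

/-- Closed-form expression of the Cauchy-Schwarz divergence
D_CS(p;q) = −log((∫ pq)²/(∫ p² ∫ q²)) between two multivariate Gaussian densities. -/
theorem cs_divergence_gaussians_closed_form (d : ℕ) (hd : 1 ≤ d) (μ₁ μ₂ : Fin d → ℝ)
    (S₁ S₂ : Matrix (Fin d) (Fin d) ℝ) (h₁ : S₁.PosDef) (h₂ : S₂.PosDef)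
    (p q : (Fin d → ℝ) → ℝ)
    (hp : p = fun x => (Real.sqrt ((2 * Real.pi) ^ d * S₁.det))⁻¹ *
      Real.exp (-(1 / 2) * ((x - μ₁) ⬝ᵥ (S₁⁻¹ *ᵥ (x - μ₁)))))
    (hq : q = fun x => (Real.sqrt ((2 * Real.pi) ^ d * S₂.det))⁻¹ *
      Real.exp (-(1 / 2) * ((x - μ₂) ⬝ᵥ (S₂⁻¹ *ᵥ (x - μ₂))))) :
    -Real.log ((∫ x, p x * q x ∂volume) ^ 2 /
        ((∫ x, p x ^ 2 ∂volume) * (∫ x, q x ^ 2 ∂volume)))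
      = (μ₂ - μ₁) ⬝ᵥ ((S₁ + S₂)⁻¹ *ᵥ (μ₂ - μ₁))
        + Real.log ((S₁ + S₂).det / (2 ^ d * Real.sqrt (S₁.det * S₂.det))) :=
  cs_divergence_gaussians_closed_form_general d μ₁ μ₂ S₁ S₂ h₁ h₂ p q hp hq
end
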